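/- arXiv:2411.04394 — 2 statements merged into one kernel-verified Lean document; each statement's English description precedes it below -/
import Mathlib

section
/- (From traversal avoidance to a risk lower bound, ensemble version.) Let f*_0 = Σ_{S∈𝒮} α_S χ_S be any function, let f̂ be a regression tree ensemble model fit using a regression tree algorithm whose leaf labels are within-leaf mean responses, assume |Y| ≤ M almost surely, let 𝒮' ⊆ 𝒮 be a subcollection, and let T ⊆ {1,…,d} be any set with |T ∩ S| ≥ 2 for each S ∈ 𝒮'. Then the expected L² risk satisfies 𝔯(f̂, f*_0, d, n) ≥ (1 − κδ) · Σ_{S∈𝒮'} α_S², where δ := max_{x ∈ {−1,1}^d} P{ J(x; D_n, Θ) ∩ T ≠ ∅ } and κ := 2M / (Σ_{S∈𝒮'} α_S²)^{1/2}. -/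
open MeasureTheory ProbabilityTheory

namespace GreedyTrees

/-- The `±1` value of a Boolean coordinate. -/
def sgn (b : Bool) : ℝ := if b then 1 else -1

variable {d n : ℕ}

/-- The Fourier character (monomial) `χ_S` on the Boolean cube `{±1}^d`. -/
def chi (S : Finset (Fin d)) (x : Fin d → Bool) : ℝ := ∏ j ∈ S, sgn (x j)

/-- Expectation with respect to the uniform distribution on `{±1}^d`. -/
noncomputable def cubeMean (f : (Fin d → Bool) → ℝ) : ℝ := (∑ x : Fin d → Bool, f x) / 2 ^ d

/-- The `L²` risk `R(g, f) = E_{X ∼ ν} (g X - f X)²` for `ν` uniform on `{±1}^d`. -/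
noncomputable def cubeRisk (g f : (Fin d → Bool) → ℝ) : ℝ := cubeMean fun x => (g x - f x) ^ 2

/-- Variance with respect to the uniform distribution on `{±1}^d`. -/
noncomputable def cubeVar (f : (Fin d → Bool) → ℝ) : ℝ := cubeMean fun x => (f x - cubeMean f) ^ 2

/-- Supremum norm of a function on the cube. -/
noncomputable def supAbs (f : (Fin d → Bool) → ℝ) : ℝ := ⨆ x, |f x|

/-- Fourier coefficient `α_S` of `f`. -/
noncomputable def fourierCoeff (f : (Fin d → Bool) → ℝ) (S : Finset (Fin d)) : ℝ :=
  cubeMean fun x => f x * chi S x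

open Classical in
/-- Fourier support `𝒮` of `f` : subsets with nonzero Fourier coefficient. -/
noncomputable def fourierSupport (f : (Fin d → Bool) → ℝ) : Finset (Finset (Fin d)) :=
  Finset.univ.filter fun S => fourierCoeff f S ≠ 0

/-- Union of a list of finsets. -/
def listUnion (L : List (Finset (Fin d))) : Finset (Fin d) := L.foldr (· ∪ ·) ∅

/-- Staircase condition: each entry brings in at most one new coordinate. -/
def Staircase (L : List (Finset (Fin d))) : Prop :=
  ∀ (i : ℕ) (h : i < L.length), ((L.get ⟨i, h⟩) \ listUnion (L.take i)).card ≤ 1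

/-- The merged-staircase property (MSP) of a collection of subsets. -/
def MSP (Sc : Finset (Finset (Fin d))) : Prop :=
  ∃ L : List (Finset (Fin d)), L.toFinset = Sc ∧ L.Nodup ∧ Staircase L

/-- `S` is connected to `∅` in the Fourier graph of the collection `Sc`. -/
def ReachesEmpty (Sc : Finset (Finset (Fin d))) (S : Finset (Fin d)) : Prop :=
  ∃ L : List (Finset (Fin d)), (∀ T ∈ L, T ∈ Sc) ∧ S ∈ L ∧ Staircase L

open Classical in
/-- `𝒮_MSP` : the part of the collection connected to `∅` in the Fourier graph. -/
noncomputable def mspPart (Sc : Finset (Finset (Fin d))) : Finset (Finset (Fin d)) :=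
  Sc.filter fun S => ReachesEmpty Sc S

/-- `T` is a traversal of a collection: it meets every member in ≥ 2 coordinates. -/
def IsTraversal (Sc : Finset (Finset (Fin d))) (T : Finset (Fin d)) : Prop :=
  ∀ S ∈ Sc, 2 ≤ (T ∩ S).card

/-- The MSP residual `r_MSP = Σ_{S ∈ 𝒮 \ 𝒮_MSP} α_S χ_S` of `f`. -/
noncomputable def mspResidual (f : (Fin d → Bool) → ℝ) : (Fin d → Bool) → ℝ :=
  fun x => ∑ S ∈ fourierSupport f \ mspPart (fourierSupport f), fourierCoeff f S * chi S x

/-- Total Fourier weight `w(𝒜) = Σ_{S ∈ 𝒜} α_S²` of a collection of vertices. -/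
noncomputable def wt (f : (Fin d → Bool) → ℝ) (A : Finset (Finset (Fin d))) : ℝ :=
  ∑ S ∈ A, fourierCoeff f S ^ 2

/-- The subcube (cell) `{x : x_j = z_j for j ∈ J}` as a finset of points. -/
def subcube (J : Finset (Fin d)) (z : Fin d → Bool) : Finset (Fin d → Bool) :=
  Finset.univ.filter fun x => ∀ j ∈ J, x j = z j

/-- Conditional mean of `f` on a subcube. -/
noncomputable def subcubeMean (f : (Fin d → Bool) → ℝ) (J : Finset (Fin d))
    (z : Fin d → Bool) : ℝ :=
  (∑ x ∈ subcube J z, f x) / (subcube J z).card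

/-- Conditional covariance of `f` and `g` on a subcube. -/
noncomputable def subcubeCov (f g : (Fin d → Bool) → ℝ) (J : Finset (Fin d))
    (z : Fin d → Bool) : ℝ :=
  (∑ x ∈ subcube J z, (f x - subcubeMean f J z) * (g x - subcubeMean g J z)) /
    (subcube J z).card

/-- Conditional variance of `f` on a subcube. -/
noncomputable def subcubeVar (f : (Fin d → Bool) → ℝ) (J : Finset (Fin d))
    (z : Fin d → Bool) : ℝ :=
  subcubeCov f f J z

/-- The restriction of `f` to the subcube `(J, z)` viewed as a function of the
free coordinates. -/
def restrictCube (f : (Fin d → Bool) → ℝ) (J : Finset (Fin d)) (z : Fin d → Bool) :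
    (Fin d → Bool) → ℝ :=
  fun x => f fun j => if j ∈ J then z j else x j

/-- `f` (as a function) satisfies the merged-staircase property. -/
def MSPfun (f : (Fin d → Bool) → ℝ) : Prop := MSP (fourierSupport f)

/-- `f` satisfies the stable merged-staircase property: every restriction to a
subcube satisfies MSP. -/
def SMSPfun (f : (Fin d → Bool) → ℝ) : Prop :=
  ∀ (J : Finset (Fin d)) (z : Fin d → Bool), MSPfun (restrictCube f J z)

/-- `f ∈ SMSP(λ)` : for every subcube on which `f` is nonconstant,
`max_{k ∉ J(C)} Cov²(f(X), X_k | X ∈ C) · 2^{-|J(C) ∩ S*|} ≥ λ`. -/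
def SMSPlam (f : (Fin d → Bool) → ℝ) (Sstar : Finset (Fin d)) (lam : ℝ) : Prop :=
  ∀ (J : Finset (Fin d)) (z : Fin d → Bool),
    (∃ x ∈ subcube J z, ∃ y ∈ subcube J z, f x ≠ f y) →
    ∃ k ∉ J, lam ≤ (subcubeCov f (fun y => sgn (y k)) J z) ^ 2 *
      ((2 : ℝ) ^ (J ∩ Sstar).card)⁻¹

/-- Sub-Gaussian random variable with parameter `σ` (via the MGF bound). -/
def IsSubGaussian {Ω : Type*} [MeasurableSpace Ω] (μ : Measure Ω) (Z : Ω → ℝ)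
    (σ : ℝ) : Prop :=
  ∀ t : ℝ, ∫ ω, Real.exp (t * Z ω) ∂μ ≤ Real.exp (σ ^ 2 * t ^ 2 / 2)

/-- Indices of the samples lying in the cell determined by the values of `x`
on the coordinates in `J`. -/
def cellIdx (X : Fin n → Fin d → Bool) (x : Fin d → Bool) (J : Finset (Fin d)) :
    Finset (Fin n) :=
  Finset.univ.filter fun i => ∀ j ∈ J, X i j = x j

/-- Value of a split criterion `F` at coordinate `k` in a cell: it depends on
the data only through the marginal data `{(X_{ik}, Y_i) : i in the cell}`. -/
def critVal (F : Multiset (Bool × ℝ) → ℝ) (X : Fin n → Fin d → Bool) (Y : Fin n → ℝ)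
    (x : Fin d → Bool) (J : Finset (Fin d)) (k : Fin d) : ℝ :=
  F ((cellIdx X x J).val.map fun i => (X i k, Y i))

/-- Abstract model of a regression tree fitted by a greedy tree algorithm:
for every dataset and query point it records the coordinates split on along the
root-to-leaf path of the query point.  Each split coordinate maximizes a fixed
sign-flip invariant criterion `F` of the marginal data in the current cell,
every split cell contains at least one sample, and the path depends on the
query point only through the coordinates split along it (tree structure). -/
structure GreedyTreeModel (n d : ℕ) where
  F : Multiset (Bool × ℝ) → ℝ
  flip_invariant : ∀ m : Multiset (Bool × ℝ), F (m.map fun p => (!p.1, p.2)) = F m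
  splits : (Fin n → Fin d → Bool) → (Fin n → ℝ) → (Fin d → Bool) → List (Fin d)
  nodup : ∀ X Y x, (splits X Y x).Nodup
  greedy : ∀ X Y x (t : ℕ) (ht : t < (splits X Y x).length) (k : Fin d),
      k ∉ ((splits X Y x).take t).toFinset →
      critVal F X Y x ((splits X Y x).take t).toFinset k ≤
        critVal F X Y x ((splits X Y x).take t).toFinset ((splits X Y x).get ⟨t, ht⟩)
  nonempty_internal : ∀ X Y x (t : ℕ), t < (splits X Y x).length →
      (cellIdx X x ((splits X Y x).take t).toFinset).Nonempty
  consistent : ∀ X Y x x', (∀ j ∈ splits X Y x, x j = x' j) → splits X Y x' = splits X Y x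

/-- The set `J(x; D_n, Θ)` of coordinates split along the query path of `x`. -/
def GreedyTreeModel.queryCoords (M : GreedyTreeModel n d) (X : Fin n → Fin d → Bool)
    (Y : Fin n → ℝ) (x : Fin d → Bool) : Finset (Fin d) :=
  (M.splits X Y x).toFinset

/-- Prediction of the fitted tree: the mean response in the leaf containing `x`. -/
noncomputable def GreedyTreeModel.pred (M : GreedyTreeModel n d)
    (X : Fin n → Fin d → Bool) (Y : Fin n → ℝ) (x : Fin d → Bool) : ℝ :=
  (∑ i ∈ cellIdx X x (M.queryCoords X Y x), Y i) /
    (cellIdx X x (M.queryCoords X Y x)).card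

/-- Mean of a multiset of reals. -/
noncomputable def msetMean (m : Multiset ℝ) : ℝ := m.sum / (m.card : ℝ)

/-- Empirical variance (impurity) of a multiset of reals. -/
noncomputable def msetVar (m : Multiset ℝ) : ℝ :=
  ((m.map fun y => (y - msetMean m) ^ 2).sum) / (m.card : ℝ)

/-- The CART impurity decrease, as a function of the marginal data
`{(X_{ik}, Y_i)}` of a coordinate in a cell. -/
noncomputable def impurityDecrease (m : Multiset (Bool × ℝ)) : ℝ :=
  msetVar (m.map Prod.snd) -
    (((m.filter fun p => p.1 = true).card : ℝ) / (m.card : ℝ)) *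
      msetVar ((m.filter fun p => p.1 = true).map Prod.snd) -
    (((m.filter fun p => p.1 = false).card : ℝ) / (m.card : ℝ)) *
      msetVar ((m.filter fun p => p.1 = false).map Prod.snd)

/-- A CART model: a greedy tree model whose criterion is the impurity decrease,
grown with the minimum impurity decrease stopping rule with threshold `γ`. -/
structure CARTModel (n d : ℕ) (γ : ℝ) extends GreedyTreeModel n d where
  F_eq : F = impurityDecrease
  continue_split : ∀ X Y x (t : ℕ) (ht : t < (splits X Y x).length),
      γ ≤ (((cellIdx X x ((splits X Y x).take t).toFinset).card : ℝ) / (n : ℝ)) *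
        critVal impurityDecrease X Y x ((splits X Y x).take t).toFinset
          ((splits X Y x).get ⟨t, ht⟩)
  stop_leaf : ∀ X Y x (k : Fin d), k ∉ (splits X Y x).toFinset →
      (((cellIdx X x (splits X Y x).toFinset).card : ℝ) / (n : ℝ)) *
        critVal impurityDecrease X Y x (splits X Y x).toFinset k < γ

/-- Number of samples in the subcube `(J, z)`. -/
def cellN (X : Fin n → Fin d → Bool) (J : Finset (Fin d)) (z : Fin d → Bool) : ℕ :=
  (cellIdx X z J).card

/-- Mean response over the samples in the subcube `(J, z)`. -/
noncomputable def cellYbar (X : Fin n → Fin d → Bool) (Y : Fin n → ℝ)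
    (J : Finset (Fin d)) (z : Fin d → Bool) : ℝ :=
  (∑ i ∈ cellIdx X z J, Y i) / (cellN X J z : ℝ)

/-- Empirical square-root impurity decrease
`Δ̂^{1/2}(k; C, D) = √(p_k(C)(1 - p_k(C))) (Ȳ_{T_{k,1}C} - Ȳ_{T_{k,-1}C})`. -/
noncomputable def empSqrtID (X : Fin n → Fin d → Bool) (Y : Fin n → ℝ)
    (J : Finset (Fin d)) (z : Fin d → Bool) (k : Fin d) : ℝ :=
  Real.sqrt (((cellN X (insert k J) (Function.update z k true) : ℝ) / (cellN X J z : ℝ)) *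
      (1 - (cellN X (insert k J) (Function.update z k true) : ℝ) / (cellN X J z : ℝ))) *
    (cellYbar X Y (insert k J) (Function.update z k true) -
      cellYbar X Y (insert k J) (Function.update z k false))

/-- Population square-root impurity decrease
`Δ^{1/2}(k; C) = (E[Y | X ∈ T_{k,1}C] - E[Y | X ∈ T_{k,-1}C]) / 2`
(for zero-mean noise, conditional means of `Y` equal conditional means of `f*`). -/
noncomputable def popSqrtID (f : (Fin d → Bool) → ℝ) (J : Finset (Fin d))
    (z : Fin d → Bool) (k : Fin d) : ℝ :=
  (subcubeMean f (insert k J) (Function.update z k true) -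
    subcubeMean f (insert k J) (Function.update z k false)) / 2

/-- Binary decision tree with axis-aligned splits and real leaf labels. -/
inductive TreeFun (d : ℕ) : Type
  | leaf : ℝ → TreeFun d
  | node : Fin d → TreeFun d → TreeFun d → TreeFun d

/-- Evaluation of a tree as a piecewise constant function on the cube. -/
def TreeFun.eval : TreeFun d → (Fin d → Bool) → ℝ
  | .leaf c, _ => c
  | .node k l r, x => if x k then TreeFun.eval r x else TreeFun.eval l x

/-- Depth of a tree. -/
def TreeFun.depth : TreeFun d → ℕ
  | .leaf _ => 0
  | .node _ l r => max (TreeFun.depth l) (TreeFun.depth r) + 1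

/-- All leaf labels bounded by `M` in absolute value. -/
def TreeFun.leafBound (M : ℝ) : TreeFun d → Prop
  | .leaf c => |c| ≤ M
  | .node _ l r => TreeFun.leafBound M l ∧ TreeFun.leafBound M r

/-- Empirical `L²` risk of a tree on a dataset. -/
noncomputable def empRisk (D : Fin n → (Fin d → Bool) × ℝ) (t : TreeFun d) : ℝ :=
  (∑ i, ((D i).2 - t.eval (D i).1) ^ 2) / n

/-- A greedy tree grown along the query path of a point with every cell being
split (no stopping rule): the path has full length `d`. -/
structure FullGreedyPath (n d : ℕ) where
  F : Multiset (Bool × ℝ) → ℝ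
  flip_invariant : ∀ m : Multiset (Bool × ℝ), F (m.map fun p => (!p.1, p.2)) = F m
  splits : (Fin n → Fin d → Bool) → (Fin n → ℝ) → (Fin d → Bool) → List (Fin d)
  nodup : ∀ X Y x, (splits X Y x).Nodup
  length_eq : ∀ X Y x, (splits X Y x).length = d
  greedy : ∀ X Y x (t : ℕ) (ht : t < (splits X Y x).length) (k : Fin d),
      k ∉ ((splits X Y x).take t).toFinset →
      critVal F X Y x ((splits X Y x).take t).toFinset k ≤
        critVal F X Y x ((splits X Y x).take t).toFinset ((splits X Y x).get ⟨t, ht⟩)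


/-!
Let `g = Σ_{S ∈ 𝒮'} α_S χ_S`. Expanding `0 ≤ ‖F - f + g‖²` with `⟨f, g⟩ = ‖g‖² = Σ_{S ∈ 𝒮'} α_S²`
gives `R(F, f) ≥ Σ_{S ∈ 𝒮'} α_S² - 2 ⟨F, g⟩`. Where a tree's path avoids `T`, its prediction
and the event of avoiding `T` are both invariant under flipping a coordinate `j ∈ T ∩ S`, which
changes the sign of `χ_S`; so that part of the tree is orthogonal to every `χ_S`, `S ∈ 𝒮'`. Only
the part on the event of hitting `T` remains, bounded by `M · E[1{hit} |g|]`. Taking expectations,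
the probability of hitting is at most `δ`, and `E|g| ≤ ‖g‖` by Cauchy–Schwarz.
-/

open scoped BigOperators

lemma abs_sum_div_card_le {ι : Type*} {I : Finset ι} (hI : I.Nonempty) {y : ι → ℝ} {M : ℝ}
    (hy : ∀ i ∈ I, |y i| ≤ M) : |(∑ i ∈ I, y i) / I.card| ≤ M := by
  rw [← Finset.expect_eq_sum_div_card]
  exact (Finset.abs_expect_le _ _).trans (Finset.expect_le hI hy)

lemma cubeMean_eq_expect (f : (Fin d → Bool) → ℝ) : cubeMean f = 𝔼 x, f x := by
  rw [Fintype.expect_eq_sum_div_card, cubeMean]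
  simp

lemma sgn_not (b : Bool) : sgn (!b) = -sgn b := by cases b <;> norm_num [sgn]

lemma chi_mul_self (S : Finset (Fin d)) (x : Fin d → Bool) : chi S x * chi S x = 1 := by
  rw [chi, ← Finset.prod_mul_distrib]
  exact Finset.prod_eq_one fun j _ => by cases x j <;> norm_num [sgn]

lemma chi_update_not_of_mem {S : Finset (Fin d)} {j : Fin d} (hj : j ∈ S) (x : Fin d → Bool) :
    chi S (Function.update x j (!x j)) = -chi S x := by
  rw [chi, chi, ← Finset.mul_prod_erase S _ hj, ← Finset.mul_prod_erase S _ hj,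
    Function.update_self, sgn_not, neg_mul]
  congr 2
  exact Finset.prod_congr rfl fun i hi => by rw [Function.update_of_ne (Finset.ne_of_mem_erase hi)]

lemma chi_update_of_not_mem {S : Finset (Fin d)} {j : Fin d} (hj : j ∉ S) (x : Fin d → Bool)
    (b : Bool) : chi S (Function.update x j b) = chi S x :=
  Finset.prod_congr rfl fun i hi => by rw [Function.update_of_ne (ne_of_mem_of_not_mem hi hj)]

lemma cubeMean_eq_zero_of_update_not (j : Fin d) {F : (Fin d → Bool) → ℝ}
    (hF : ∀ x, F (Function.update x j (!x j)) = -F x) : cubeMean F = 0 := by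
  let σ : Equiv.Perm (Fin d → Bool) :=
    Function.Involutive.toPerm (fun x => Function.update x j (!x j)) fun x => by simp
  have hsum : ∑ x, F (σ x) = ∑ x, -F x := Finset.sum_congr rfl fun x _ => hF x
  rw [Equiv.sum_comp, Finset.sum_neg_distrib] at hsum
  rw [cubeMean, self_eq_neg.mp hsum, zero_div]

lemma cubeMean_chi_mul_chi (S S' : Finset (Fin d)) :
    cubeMean (fun x => chi S x * chi S' x) = if S = S' then 1 else 0 := by
  split_ifs with h
  · subst h
    simp [cubeMean_eq_expect, chi_mul_self]
  · obtain ⟨j, hj⟩ := Finset.symmDiff_nonempty.mpr h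
    refine cubeMean_eq_zero_of_update_not j fun x => ?_
    rcases Finset.mem_symmDiff.mp hj with ⟨hjS, hjS'⟩ | ⟨hjS', hjS⟩
    · rw [chi_update_not_of_mem hjS, chi_update_of_not_mem hjS', neg_mul]
    · rw [chi_update_not_of_mem hjS', chi_update_of_not_mem hjS, mul_neg]

noncomputable def fourierProj (f : (Fin d → Bool) → ℝ) (Sc : Finset (Finset (Fin d)))
    (x : Fin d → Bool) : ℝ :=
  ∑ S ∈ Sc, fourierCoeff f S * chi S x

lemma cubeMean_mul_fourierProj (h f : (Fin d → Bool) → ℝ) (Sc : Finset (Finset (Fin d))) :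
    cubeMean (fun x => h x * fourierProj f Sc x) = ∑ S ∈ Sc, fourierCoeff f S * fourierCoeff h S := by
  simp only [fourierCoeff, fourierProj, cubeMean_eq_expect, Finset.mul_sum, Finset.mul_expect]
  rw [Finset.expect_sum_comm]
  exact Finset.sum_congr rfl fun S _ => Finset.expect_congr rfl fun x _ => by ring

lemma fourierCoeff_fourierProj {f : (Fin d → Bool) → ℝ} {Sc : Finset (Finset (Fin d))}
    {S : Finset (Fin d)} (hS : S ∈ Sc) : fourierCoeff (fourierProj f Sc) S = fourierCoeff f S := by
  have h := cubeMean_mul_fourierProj (chi S) f Sc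
  simp only [fourierCoeff] at h ⊢
  simp_rw [mul_comm (chi S _) (fourierProj f Sc _), cubeMean_chi_mul_chi] at h
  rw [h, Finset.sum_eq_single_of_mem S hS fun S' _ hS' => by rw [if_neg hS'.symm, mul_zero]]
  simp

lemma cubeMean_mul_fourierProj_self (f : (Fin d → Bool) → ℝ) (Sc : Finset (Finset (Fin d))) :
    cubeMean (fun x => f x * fourierProj f Sc x) = wt f Sc := by
  rw [cubeMean_mul_fourierProj, wt]
  simp_rw [sq]

lemma cubeMean_fourierProj_sq (f : (Fin d → Bool) → ℝ) (Sc : Finset (Finset (Fin d))) :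
    cubeMean (fun x => fourierProj f Sc x ^ 2) = wt f Sc := by
  simp_rw [sq, cubeMean_mul_fourierProj, wt]
  exact Finset.sum_congr rfl fun S hS => by rw [fourierCoeff_fourierProj hS, sq]

lemma wt_sub_two_mul_le_cubeRisk (F f : (Fin d → Bool) → ℝ) (Sc : Finset (Finset (Fin d))) :
    wt f Sc - 2 * cubeMean (fun x => F x * fourierProj f Sc x) ≤ cubeRisk F f := by
  have hexpand : cubeMean (fun x => (F x - f x + fourierProj f Sc x) ^ 2) =
      cubeRisk F f + 2 * cubeMean (fun x => F x * fourierProj f Sc x) -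
        2 * cubeMean (fun x => f x * fourierProj f Sc x) +
        cubeMean (fun x => fourierProj f Sc x ^ 2) := by
    simp only [cubeRisk, cubeMean_eq_expect, Finset.mul_expect, ← Finset.expect_add_distrib,
      ← Finset.expect_sub_distrib]
    exact Finset.expect_congr rfl fun x _ => by ring
  have hnonneg : 0 ≤ cubeMean (fun x => (F x - f x + fourierProj f Sc x) ^ 2) := by
    rw [cubeMean_eq_expect]
    exact Finset.expect_nonneg fun x _ => sq_nonneg _
  rw [hexpand, cubeMean_mul_fourierProj_self, cubeMean_fourierProj_sq] at hnonneg
  linarith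

lemma cubeMean_abs_le_sqrt_wt (f : (Fin d → Bool) → ℝ) (Sc : Finset (Finset (Fin d))) :
    cubeMean (fun x => |fourierProj f Sc x|) ≤ √(wt f Sc) := by
  have h := Finset.expect_mul_sq_le_sq_mul_sq Finset.univ (fun _ => (1 : ℝ))
    fun x => |fourierProj f Sc x|
  simp only [one_mul, one_pow, Finset.expect_const Finset.univ_nonempty, sq_abs] at h
  rw [← cubeMean_eq_expect, ← cubeMean_eq_expect, cubeMean_fourierProj_sq] at h
  exact (le_abs_self _).trans (Real.abs_le_sqrt h)

section Traversal

variable {T : Finset (Fin d)} {E : (Fin d → Bool) → Prop} [DecidablePred E]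
  {F : (Fin d → Bool) → ℝ}

lemma cubeMean_ite_mul_chi_eq_zero {S : Finset (Fin d)} (hTS : (T ∩ S).Nonempty)
    (hE : ∀ x x', (∀ j ∉ T, x j = x' j) → (E x ↔ E x'))
    (hF : ∀ x x', ¬E x → (∀ j ∉ T, x j = x' j) → F x = F x') :
    cubeMean (fun x => if E x then 0 else F x * chi S x) = 0 := by
  obtain ⟨j, hj⟩ := hTS
  obtain ⟨hjT, hjS⟩ := Finset.mem_inter.mp hj
  refine cubeMean_eq_zero_of_update_not j fun x => ?_
  have hagree : ∀ i ∉ T, x i = Function.update x j (!x j) i := fun i hi =>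
    (Function.update_of_ne (ne_of_mem_of_not_mem hjT hi).symm _ _).symm
  by_cases hx : E x
  · rw [if_pos ((hE _ _ hagree).mp hx), if_pos hx, neg_zero]
  · rw [if_neg (mt (hE _ _ hagree).mpr hx), if_neg hx, ← hF _ _ hx hagree,
      chi_update_not_of_mem hjS, mul_neg]

lemma cubeMean_mul_fourierProj_le {f : (Fin d → Bool) → ℝ} {Sc : Finset (Finset (Fin d))}
    {M : ℝ} (hT : ∀ S ∈ Sc, (T ∩ S).Nonempty)
    (hE : ∀ x x', (∀ j ∉ T, x j = x' j) → (E x ↔ E x'))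
    (hF : ∀ x x', ¬E x → (∀ j ∉ T, x j = x' j) → F x = F x') (hFM : ∀ x, |F x| ≤ M) :
    cubeMean (fun x => F x * fourierProj f Sc x) ≤
      M * cubeMean (fun x => if E x then |fourierProj f Sc x| else 0) := by
  have hsplit : ∀ x, (if E x then 0 else F x * fourierProj f Sc x) =
      ∑ S ∈ Sc, fourierCoeff f S * (if E x then 0 else F x * chi S x) := fun x => by
    split_ifs
    · simp
    · simp only [fourierProj, Finset.mul_sum]
      exact Finset.sum_congr rfl fun S _ => by ring
  have havoid : cubeMean (fun x => if E x then 0 else F x * fourierProj f Sc x) = 0 := by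
    simp only [hsplit, cubeMean_eq_expect, Finset.expect_sum_comm, ← Finset.mul_expect]
    refine Finset.sum_eq_zero fun S hS => ?_
    rw [← cubeMean_eq_expect, cubeMean_ite_mul_chi_eq_zero (hT S hS) hE hF, mul_zero]
  have hhit : ∀ x, (if E x then F x * fourierProj f Sc x else 0) ≤
      M * (if E x then |fourierProj f Sc x| else 0) := fun x => by
    split_ifs
    · exact (le_abs_self _).trans (by rw [abs_mul]; gcongr; exact hFM x)
    · simp
  calc cubeMean (fun x => F x * fourierProj f Sc x)
      = cubeMean (fun x => if E x then F x * fourierProj f Sc x else 0) +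
          cubeMean (fun x => if E x then 0 else F x * fourierProj f Sc x) := by
        simp only [cubeMean_eq_expect, ← Finset.expect_add_distrib]
        exact Finset.expect_congr rfl fun x _ => by split_ifs <;> simp
    _ ≤ M * cubeMean (fun x => if E x then |fourierProj f Sc x| else 0) := by
        rw [havoid, add_zero, cubeMean_eq_expect, cubeMean_eq_expect, Finset.mul_expect]
        exact Finset.expect_le_expect fun x _ => hhit x

end Traversal

lemma wt_sub_le_cubeRisk_average {B : ℕ} {t : Fin B → (Fin d → Bool) → ℝ}
    {E : Fin B → (Fin d → Bool) → Prop} [∀ b, DecidablePred (E b)] {f : (Fin d → Bool) → ℝ}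
    {Sc : Finset (Finset (Fin d))} {T : Finset (Fin d)} {M : ℝ}
    (hT : ∀ S ∈ Sc, (T ∩ S).Nonempty)
    (hE : ∀ b x x', (∀ j ∉ T, x j = x' j) → (E b x ↔ E b x'))
    (ht : ∀ b x x', ¬E b x → (∀ j ∉ T, x j = x' j) → t b x = t b x')
    (htM : ∀ b x, |t b x| ≤ M) :
    wt f Sc - 2 * M * (∑ b, cubeMean fun x => if E b x then |fourierProj f Sc x| else 0) / B ≤
      cubeRisk (fun x => (∑ b, t b x) / B) f := by
  refine le_trans ?_ (wt_sub_two_mul_le_cubeRisk _ f Sc)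
  have hmean : cubeMean (fun x => (∑ b, t b x) / B * fourierProj f Sc x) =
      (∑ b, cubeMean fun x => t b x * fourierProj f Sc x) / B := by
    simp only [cubeMean_eq_expect, div_mul_eq_mul_div, Finset.sum_mul, ← Finset.expect_div,
      Finset.expect_sum_comm]
  have hsum := Finset.sum_le_sum fun b (_ : b ∈ Finset.univ) =>
    cubeMean_mul_fourierProj_le (f := f) hT (hE b) (ht b) (htM b)
  rw [← Finset.mul_sum] at hsum
  rw [hmean, mul_assoc, mul_div_assoc]
  gcongr

lemma ite_eq_indicator {Ω : Type*} {E : Ω → (Fin d → Bool) → Prop} [∀ ω, DecidablePred (E ω)]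
    {c : (Fin d → Bool) → ℝ} (x : Fin d → Bool) :
    (fun ω => if E ω x then c x else 0) = {ω | E ω x}.indicator fun _ => c x := by
  ext ω
  simp [Set.indicator_apply]

section Integration

variable {Ω : Type*} [MeasurableSpace Ω] {μ : Measure Ω}

lemma ofReal_integral_le_lintegral_ofReal {f : Ω → ℝ} (hf : Integrable f μ) :
    ENNReal.ofReal (∫ ω, f ω ∂μ) ≤ ∫⁻ ω, ENNReal.ofReal (f ω) ∂μ :=
  calc ENNReal.ofReal (∫ ω, f ω ∂μ) ≤ ENNReal.ofReal (∫ ω, max (f ω) 0 ∂μ) :=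
        ENNReal.ofReal_le_ofReal (integral_mono hf hf.pos_part fun ω => le_max_left _ _)
    _ = ∫⁻ ω, ENNReal.ofReal (max (f ω) 0) ∂μ :=
        ofReal_integral_eq_lintegral_ofReal hf.pos_part (ae_of_all _ fun ω => le_max_right _ _)
    _ = ∫⁻ ω, ENNReal.ofReal (f ω) ∂μ := by simp

lemma ofReal_le_lintegral_sub_average [IsProbabilityMeasure μ] {B : ℕ} (hB : 0 < B)
    {hit : Fin B → Ω → ℝ} (hint : ∀ b, Integrable (hit b) μ) {W M δ : ℝ} (hM : 0 ≤ M)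
    (hhit : ∀ b, ∫ ω, hit b ω ∂μ ≤ δ * √W) :
    ENNReal.ofReal ((1 - 2 * M / √W * δ) * W) ≤
      ∫⁻ ω, ENNReal.ofReal (W - 2 * M * (∑ b, hit b ω) / B) ∂μ := by
  have hsum_int : Integrable (fun ω => 2 * M * (∑ b, hit b ω) / B) μ :=
    ((integrable_finsetSum _ fun b _ => hint b).const_mul _).div_const _
  refine le_trans (ENNReal.ofReal_le_ofReal ?_)
    (ofReal_integral_le_lintegral_ofReal ((integrable_const W).sub hsum_int))
  have hsum : ∑ b, ∫ ω, hit b ω ∂μ ≤ B * (δ * √W) := by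
    simpa using Finset.sum_le_sum fun b (_ : b ∈ Finset.univ) => hhit b
  rw [integral_sub (integrable_const W) hsum_int, integral_div, integral_const_mul,
    integral_finsetSum _ fun b _ => hint b]
  calc (1 - 2 * M / √W * δ) * W = W - 2 * M * δ * (W / √W) := by ring
    _ = W - 2 * M * (B * (δ * √W)) / B := by
        rw [Real.div_sqrt]
        field_simp
    _ ≤ ∫ ω, W ∂μ - (2 * M * ∑ b, ∫ ω, hit b ω ∂μ) / B := by
        simp only [integral_const, probReal_univ, one_smul]
        gcongr

variable [IsFiniteMeasure μ] {E : Ω → (Fin d → Bool) → Prop} [∀ ω, DecidablePred (E ω)]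
  {c : (Fin d → Bool) → ℝ}

lemma integrable_cubeMean_ite (hE : ∀ x, MeasurableSet {ω | E ω x}) :
    Integrable (fun ω => cubeMean fun x => if E ω x then c x else 0) μ := by
  refine (integrable_finsetSum _ fun x _ => ?_).div_const _
  rw [ite_eq_indicator]
  exact (integrable_const _).indicator (hE x)

lemma integral_cubeMean_ite_le (hE : ∀ x, MeasurableSet {ω | E ω x}) (hc : ∀ x, 0 ≤ c x)
    {δ : ℝ} (hδ : ∀ x, μ.real {ω | E ω x} ≤ δ) :
    ∫ ω, (cubeMean fun x => if E ω x then c x else 0) ∂μ ≤ δ * cubeMean c := by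
  have hint : ∀ x, ∫ ω, (if E ω x then c x else 0) ∂μ = μ.real {ω | E ω x} * c x := fun x => by
    rw [ite_eq_indicator, integral_indicator_const _ (hE x), smul_eq_mul]
  simp only [cubeMean]
  rw [integral_div, integral_finsetSum _ fun x _ => ?_, mul_div_assoc', Finset.mul_sum]
  · gcongr with x
    rw [hint]
    exact mul_le_mul_of_nonneg_right (hδ x) (hc x)
  · rw [ite_eq_indicator]
    exact (integrable_const _).indicator (hE x)

end Integration

theorem traversal_avoidance_risk_lower_bound_ensemble_general
    {Ω : Type} [MeasurableSpace Ω]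
    (μ : Measure Ω) [IsProbabilityMeasure μ]
    (d n : ℕ)
    (Y : Fin n → Ω → ℝ)
    (f0 : (Fin d → Bool) → ℝ)
    (B : ℕ) (hB : 0 < B)
    (tree : Fin B → Ω → (Fin d → Bool) → ℝ)
    (Jb : Fin B → Ω → (Fin d → Bool) → Finset (Fin d))
    (fhat : Ω → (Fin d → Bool) → ℝ)
    (hfhat : ∀ ω x, fhat ω x = (∑ b, tree b ω x) / B)
    (Mb : ℝ) (hYb : ∀ᵐ ω ∂μ, ∀ i, |Y i ω| ≤ Mb)
    -- each tree predicts the mean response over (the samples in) its leaf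
    (hmean : ∀ b ω x, ∃ I : Finset (Fin n), I.Nonempty ∧
        tree b ω x = (∑ i ∈ I, Y i ω) / I.card)
    (Sc' : Finset (Finset (Fin d)))
    (T : Finset (Fin d)) (hT : ∀ S ∈ Sc', 2 ≤ (T ∩ S).card)
    (hJmeas : ∀ b x, MeasurableSet {ω | ((Jb b ω x) ∩ T).Nonempty})
    (hloc : ∀ b ω x x', ¬ ((Jb b ω x) ∩ T).Nonempty → (∀ j, j ∉ T → x j = x' j) →
        tree b ω x = tree b ω x')
    (hev : ∀ b ω x x', (∀ j, j ∉ T → x j = x' j) →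
        (((Jb b ω x) ∩ T).Nonempty ↔ ((Jb b ω x') ∩ T).Nonempty))
    (δ : ℝ) (hδ : ∀ b x, (μ {ω | ((Jb b ω x) ∩ T).Nonempty}).toReal ≤ δ) :
    ENNReal.ofReal
        ((1 - 2 * Mb / Real.sqrt (∑ S ∈ Sc', fourierCoeff f0 S ^ 2) * δ) *
          ∑ S ∈ Sc', fourierCoeff f0 S ^ 2) ≤
      ∫⁻ ω, ENNReal.ofReal (cubeRisk (fhat ω) f0) ∂μ := by
  have hTS : ∀ S ∈ Sc', (T ∩ S).Nonempty := fun S hS => Finset.card_pos.mp (by linarith [hT S hS])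
  have hleaf : ∀ b ω, (∀ i, |Y i ω| ≤ Mb) → ∀ x, |tree b ω x| ≤ Mb := fun b ω hω x => by
    obtain ⟨I, hI, htree⟩ := hmean b ω x
    exact htree ▸ abs_sum_div_card_le hI fun i _ => hω i
  obtain ⟨ω₀, hω₀⟩ := hYb.exists
  have hMb : 0 ≤ Mb := (abs_nonneg _).trans (hleaf ⟨0, hB⟩ ω₀ hω₀ 0)
  have hδ₀ : 0 ≤ δ := ENNReal.toReal_nonneg.trans (hδ ⟨0, hB⟩ 0)
  set hit : Fin B → Ω → ℝ := fun b ω => cubeMean fun x =>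
    if ((Jb b ω x) ∩ T).Nonempty then |fourierProj f0 Sc' x| else 0
  have hrisk : ∀ᵐ ω ∂μ, wt f0 Sc' - 2 * Mb * (∑ b, hit b ω) / B ≤ cubeRisk (fhat ω) f0 := by
    filter_upwards [hYb] with ω hω
    rw [show fhat ω = fun x => (∑ b, tree b ω x) / B from funext (hfhat ω)]
    exact wt_sub_le_cubeRisk_average hTS (hev · ω) (hloc · ω) (hleaf · ω hω)
  calc ENNReal.ofReal ((1 - 2 * Mb / √(wt f0 Sc') * δ) * wt f0 Sc')
      ≤ ∫⁻ ω, ENNReal.ofReal (wt f0 Sc' - 2 * Mb * (∑ b, hit b ω) / B) ∂μ :=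
        ofReal_le_lintegral_sub_average hB (fun b => integrable_cubeMean_ite (hJmeas b)) hMb
          fun b => (integral_cubeMean_ite_le (hJmeas b) (fun x => abs_nonneg _) (hδ b)).trans
            (mul_le_mul_of_nonneg_left (cubeMean_abs_le_sqrt_wt f0 Sc') hδ₀)
    _ ≤ ∫⁻ ω, ENNReal.ofReal (cubeRisk (fhat ω) f0) ∂μ :=
        lintegral_mono_ae (hrisk.mono fun ω h => ENNReal.ofReal_le_ofReal h)

/-- From traversal avoidance to a risk lower bound, ensemble
version.  For any regression tree ensemble `fhat = (1/B) Σ_b tree b` whose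
leaf labels are within-leaf mean responses, with `|Y| ≤ M` a.s., any
subcollection `𝒮' ⊆ 𝒮` and any `T` with `|T ∩ S| ≥ 2` for `S ∈ 𝒮'`, the
expected `L²` risk is at least `(1 - κδ) Σ_{S ∈ 𝒮'} α_S²`, where
`δ := max_x P{J(x; D_n, Θ) ∩ T ≠ ∅}` and `κ := 2M/(Σ_{S ∈ 𝒮'} α_S²)^{1/2}`. -/
theorem traversal_avoidance_risk_lower_bound_ensemble
    {Ω : Type} [MeasurableSpace Ω]
    (μ : Measure Ω) [IsProbabilityMeasure μ]
    (d n s : ℕ)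
    (X : Fin n → Ω → Fin d → Bool) (eps : Fin n → Ω → ℝ) (Y : Fin n → Ω → ℝ)
    (hXmeas : ∀ i, Measurable (X i)) (hepsmeas : ∀ i, Measurable (eps i))
    (hXunif : ∀ i, Measure.map (X i) μ = (PMF.uniformOfFintype (Fin d → Bool)).toMeasure)
    (hXiid : iIndepFun X μ)
    (hepsiid : iIndepFun eps μ)
    (hepsident : ∀ i j, Measure.map (eps i) μ = Measure.map (eps j) μ)
    (hepsint : ∀ i, Integrable (eps i) μ)
    (hepsmean : ∀ i, ∫ ω, eps i ω ∂μ = 0)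
    (hXeps : IndepFun (fun ω i => X i ω) (fun ω i => eps i ω) μ)
    (Sstar : Finset (Fin d)) (hcard : Sstar.card = s)
    (f0 : (Fin d → Bool) → ℝ)
    (hsparse : ∀ x x' : Fin d → Bool, (∀ j ∈ Sstar, x j = x' j) → f0 x = f0 x')
    (hY : ∀ i ω, Y i ω = f0 (X i ω) + eps i ω)
    (B : ℕ) (hB : 0 < B)
    (tree : Fin B → Ω → (Fin d → Bool) → ℝ)
    (Jb : Fin B → Ω → (Fin d → Bool) → Finset (Fin d))
    (fhat : Ω → (Fin d → Bool) → ℝ)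
    (hfhat : ∀ ω x, fhat ω x = (∑ b, tree b ω x) / B)
    (Mb : ℝ) (hYb : ∀ᵐ ω ∂μ, ∀ i, |Y i ω| ≤ Mb)
    -- each tree predicts the mean response over (the samples in) its leaf
    (hmean : ∀ b ω x, ∃ I : Finset (Fin n), I.Nonempty ∧
        tree b ω x = (∑ i ∈ I, Y i ω) / I.card)
    (Sc' : Finset (Finset (Fin d))) (hSc' : Sc' ⊆ fourierSupport f0)
    (T : Finset (Fin d)) (hT : ∀ S ∈ Sc', 2 ≤ (T ∩ S).card)
    (htmeas : ∀ b x, Measurable fun ω => tree b ω x)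
    (hJmeas : ∀ b x, MeasurableSet {ω | ((Jb b ω x) ∩ T).Nonempty})
    (hloc : ∀ b ω x x', ¬ ((Jb b ω x) ∩ T).Nonempty → (∀ j, j ∉ T → x j = x' j) →
        tree b ω x = tree b ω x')
    (hev : ∀ b ω x x', (∀ j, j ∉ T → x j = x' j) →
        (((Jb b ω x) ∩ T).Nonempty ↔ ((Jb b ω x') ∩ T).Nonempty))
    (δ : ℝ) (hδ : ∀ b x, (μ {ω | ((Jb b ω x) ∩ T).Nonempty}).toReal ≤ δ) :
    ENNReal.ofReal
        ((1 - 2 * Mb / Real.sqrt (∑ S ∈ Sc', fourierCoeff f0 S ^ 2) * δ) *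
          ∑ S ∈ Sc', fourierCoeff f0 S ^ 2) ≤
      ∫⁻ ω, ENNReal.ofReal (cubeRisk (fhat ω) f0) ∂μ :=
  traversal_avoidance_risk_lower_bound_ensemble_general μ d n Y f0 B hB tree Jb fhat hfhat Mb hYb
    hmean Sc' T hT hJmeas hloc hev δ hδ

end GreedyTrees
end

section
/- (Covariate selection is necessary for small risk, tree version.) Let f̂ be a regression tree model fit using a regression tree algorithm. Then the expected L² risk satisfies 𝔯(f̂, f*_0, d, n) ≥ (1 − δ)·Var(f*_0(X)), where δ := P{ J(X; D_n, Θ) ∩ S* ≠ ∅ }, the probability being over X ∼ ν independent of (D_n, Θ). -/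
/-!
Fix the data and the seed. Off the event that the query path of `x` splits on `S*`, the
prediction at `x` ignores `x_{S*}`, while `f*` depends on nothing else. Re-randomising `x_{S*}`
independently of the other coordinates (splicing two independent uniform points) therefore
shows that there the error is at least `E (c - f*₀)² ≥ Var f*₀` with the constant `c = f̂(x)`.
Averaging over `x` and then over the data gives the factor `1 - δ`.
-/

open MeasureTheory ProbabilityTheory

namespace GreedyTrees

variable {d n : ℕ}

section CubeMean

variable {d : ℕ}

lemma cubeMean_const (c : ℝ) : cubeMean (fun _ : Fin d → Bool => c) = c := by
  simp [cubeMean, Finset.card_univ]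

lemma cubeMean_mono {f g : (Fin d → Bool) → ℝ} (h : ∀ x, f x ≤ g x) :
    cubeMean f ≤ cubeMean g := by
  unfold cubeMean
  gcongr with x
  exact h x

lemma cubeMean_nonneg {f : (Fin d → Bool) → ℝ} (h : ∀ x, 0 ≤ f x) : 0 ≤ cubeMean f :=
  cubeMean_const (d := d) 0 ▸ cubeMean_mono h

lemma cubeVar_nonneg (f : (Fin d → Bool) → ℝ) : 0 ≤ cubeVar f :=
  cubeMean_nonneg fun _ => sq_nonneg _

lemma cubeMean_sub_sq (f : (Fin d → Bool) → ℝ) (c : ℝ) :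
    cubeMean (fun x => (c - f x) ^ 2) = cubeVar f + (cubeMean f - c) ^ 2 := by
  simp only [cubeVar, cubeMean, sub_sq, Finset.sum_add_distrib, Finset.sum_sub_distrib,
    ← Finset.sum_mul, ← Finset.mul_sum, Finset.sum_const, Finset.card_univ, Fintype.card_pi,
    Fintype.card_bool, Finset.prod_const, Fintype.card_fin, nsmul_eq_mul, Nat.cast_pow,
    Nat.cast_ofNat]
  field_simp
  ring

lemma cubeVar_le_cubeMean_sub_sq (f : (Fin d → Bool) → ℝ) (c : ℝ) :
    cubeVar f ≤ cubeMean (fun x => (c - f x) ^ 2) := by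
  rw [cubeMean_sub_sq]
  exact le_add_of_nonneg_right (sq_nonneg _)

def splice (S : Finset (Fin d)) (x y : Fin d → Bool) : Fin d → Bool :=
  fun j => if j ∈ S then y j else x j

lemma splice_splice (S : Finset (Fin d)) (x y : Fin d → Bool) :
    splice S (splice S x y) (splice S y x) = x := by
  funext j
  by_cases hj : j ∈ S <;> simp [splice, hj]

lemma cubeMean_cubeMean_splice (S : Finset (Fin d)) (F : (Fin d → Bool) → ℝ) :
    cubeMean (fun x => cubeMean fun y => F (splice S x y)) = cubeMean F := by
  have hswap : Function.Involutive
      fun p : (Fin d → Bool) × (Fin d → Bool) => (splice S p.1 p.2, splice S p.2 p.1) :=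
    fun p => Prod.ext (splice_splice S p.1 p.2) (splice_splice S p.2 p.1)
  have hsum : ∑ x, ∑ y, F (splice S x y) = ∑ x : Fin d → Bool, ∑ _y : Fin d → Bool, F x := by
    rw [← Fintype.sum_prod_type', ← Fintype.sum_prod_type']
    exact Fintype.sum_bijective _ hswap.bijective _ (fun q => F q.1) fun _ => rfl
  simp only [cubeMean, ← Finset.sum_div, hsum]
  simp only [Finset.sum_const, Finset.card_univ, Fintype.card_pi, Fintype.card_bool,
    Finset.prod_const, Fintype.card_fin, nsmul_eq_mul, Nat.cast_pow, Nat.cast_ofNat,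
    ← Finset.mul_sum]
  field_simp

end CubeMean

lemma one_sub_cubeMean_indicator_mul_cubeVar_le_cubeRisk {d : ℕ} (S : Finset (Fin d))
    {f g : (Fin d → Bool) → ℝ} (E : Set (Fin d → Bool))
    (hf : ∀ x x', (∀ j ∈ S, x j = x' j) → f x = f x')
    (hg : ∀ x x', x ∉ E → (∀ j, j ∉ S → x j = x' j) → g x = g x') :
    (1 - cubeMean (E.indicator 1)) * cubeVar f ≤ cubeRisk g f := by
  have hpoint : ∀ x, (1 - E.indicator 1 x) * cubeVar f ≤
      cubeMean fun y => (g (splice S x y) - f (splice S x y)) ^ 2 := by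
    intro x
    by_cases hx : x ∈ E
    · simpa [hx] using cubeMean_nonneg fun y => sq_nonneg _
    · have hg' : ∀ y, g (splice S x y) = g x := fun y =>
        (hg x _ hx fun j hj => by simp [splice, hj]).symm
      have hf' : ∀ y, f (splice S x y) = f y := fun y => hf _ _ fun j hj => by simp [splice, hj]
      simpa [hx, hg', hf'] using cubeVar_le_cubeMean_sub_sq f (g x)
  calc (1 - cubeMean (E.indicator 1)) * cubeVar f
      = cubeMean fun x => (1 - E.indicator 1 x) * cubeVar f := by
        simp only [cubeMean, sub_mul, Finset.sum_sub_distrib, ← Finset.sum_mul, Finset.sum_const,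
          Finset.card_univ, Fintype.card_pi, Fintype.card_bool, Finset.prod_const,
          Fintype.card_fin, nsmul_eq_mul, Nat.cast_pow, Nat.cast_ofNat]
        field_simp
    _ ≤ cubeMean fun x => cubeMean fun y => (g (splice S x y) - f (splice S x y)) ^ 2 :=
        cubeMean_mono hpoint
    _ = cubeRisk g f := cubeMean_cubeMean_splice S fun x => (g x - f x) ^ 2

section Integration

variable {Ω : Type*} [MeasurableSpace Ω] {d : ℕ}

lemma integral_cubeMean_indicator (μ : Measure Ω) [IsFiniteMeasure μ]
    {A : (Fin d → Bool) → Set Ω} (hA : ∀ x, MeasurableSet (A x)) :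
    ∫ ω, cubeMean (fun x => (A x).indicator 1 ω) ∂μ = cubeMean fun x => μ.real (A x) := by
  simp only [cubeMean]
  rw [integral_div, integral_finsetSum _ fun x _ => (integrable_const 1).indicator (hA x)]
  simp_rw [integral_indicator_one (hA _)]

lemma ofReal_one_sub_cubeMean_measureReal_mul_le_lintegral (μ : Measure Ω)
    [IsProbabilityMeasure μ] {A : (Fin d → Bool) → Set Ω} (hA : ∀ x, MeasurableSet (A x))
    {V : ℝ} (hV : 0 ≤ V) {R : Ω → ℝ}
    (hR : ∀ ω, (1 - cubeMean fun x => (A x).indicator 1 ω) * V ≤ R ω) :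
    ENNReal.ofReal ((1 - cubeMean fun x => μ.real (A x)) * V) ≤
      ∫⁻ ω, ENNReal.ofReal (R ω) ∂μ := by
  set p : Ω → ℝ := fun ω => cubeMean fun x => (A x).indicator 1 ω
  have hp_int : Integrable p μ := by
    simp only [p, cubeMean]
    exact (integrable_finsetSum _ fun x _ => (integrable_const 1).indicator (hA x)).div_const _
  have hp_le : ∀ ω, p ω ≤ 1 := fun ω =>
    cubeMean_const (d := d) 1 ▸ cubeMean_mono fun x =>
      Set.indicator_le_self' (f := 1) (fun _ _ => zero_le_one) ω
  have hint : Integrable (fun ω => (1 - p ω) * V) μ :=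
    ((integrable_const 1).sub hp_int).mul_const V
  calc ENNReal.ofReal ((1 - cubeMean fun x => μ.real (A x)) * V)
      = ENNReal.ofReal (∫ ω, (1 - p ω) * V ∂μ) := by
        rw [integral_mul_const, integral_sub (integrable_const 1) hp_int,
          integral_cubeMean_indicator μ hA]
        simp
    _ = ∫⁻ ω, ENNReal.ofReal ((1 - p ω) * V) ∂μ :=
        ofReal_integral_eq_lintegral_ofReal hint
          (Filter.Eventually.of_forall fun ω => mul_nonneg (sub_nonneg.2 (hp_le ω)) hV)
    _ ≤ ∫⁻ ω, ENNReal.ofReal (R ω) ∂μ := lintegral_mono fun ω => ENNReal.ofReal_le_ofReal (hR ω)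

end Integration

theorem covariate_selection_necessary_tree_general
    {Ω : Type} [MeasurableSpace Ω]
    (μ : Measure Ω) [IsProbabilityMeasure μ]
    (d : ℕ)
    (Sstar : Finset (Fin d))
    (f0 : (Fin d → Bool) → ℝ)
    (hsparse : ∀ x x' : Fin d → Bool, (∀ j ∈ Sstar, x j = x' j) → f0 x = f0 x')
    (fhat : Ω → (Fin d → Bool) → ℝ)
    (Jq : Ω → (Fin d → Bool) → Finset (Fin d))
    (hJmeas : ∀ x, MeasurableSet {ω | ((Jq ω x) ∩ Sstar).Nonempty})
    -- on the event `J(x) ∩ S* = ∅` the prediction does not change when the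
    -- coordinates of `x` in `S*` are changed
    (hloc : ∀ ω x x', ¬ ((Jq ω x) ∩ Sstar).Nonempty → (∀ j, j ∉ Sstar → x j = x' j) →
        fhat ω x = fhat ω x') :
    ENNReal.ofReal
        ((1 - cubeMean fun x => (μ {ω | ((Jq ω x) ∩ Sstar).Nonempty}).toReal) *
          cubeVar f0) ≤
      ∫⁻ ω, ENNReal.ofReal (cubeRisk (fhat ω) f0) ∂μ :=
  ofReal_one_sub_cubeMean_measureReal_mul_le_lintegral μ hJmeas (cubeVar_nonneg f0) fun ω =>
    one_sub_cubeMean_indicator_mul_cubeVar_le_cubeRisk Sstar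
      {x | ((Jq ω x) ∩ Sstar).Nonempty} hsparse fun x x' => hloc ω x x'

/-- Covariate selection is necessary for small risk, tree
version.  For any regression tree model `fhat` with query-path split sets
`Jq`, the expected `L²` risk is at least `(1 - δ)·Var(f*₀(X))`, where
`δ := P{J(X; D_n, Θ) ∩ S* ≠ ∅}` with `X ∼ ν` independent of the data. -/
theorem covariate_selection_necessary_tree
    {Ω : Type} [MeasurableSpace Ω]
    (μ : Measure Ω) [IsProbabilityMeasure μ]
    (d n s : ℕ)
    (X : Fin n → Ω → Fin d → Bool) (eps : Fin n → Ω → ℝ) (Y : Fin n → Ω → ℝ)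
    (hXmeas : ∀ i, Measurable (X i)) (hepsmeas : ∀ i, Measurable (eps i))
    (hXunif : ∀ i, Measure.map (X i) μ = (PMF.uniformOfFintype (Fin d → Bool)).toMeasure)
    (hXiid : iIndepFun X μ)
    (hepsiid : iIndepFun eps μ)
    (hepsident : ∀ i j, Measure.map (eps i) μ = Measure.map (eps j) μ)
    (hepsint : ∀ i, Integrable (eps i) μ)
    (hepsmean : ∀ i, ∫ ω, eps i ω ∂μ = 0)
    (hXeps : IndepFun (fun ω i => X i ω) (fun ω i => eps i ω) μ)
    (Sstar : Finset (Fin d)) (hcard : Sstar.card = s)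
    (f0 : (Fin d → Bool) → ℝ)
    (hsparse : ∀ x x' : Fin d → Bool, (∀ j ∈ Sstar, x j = x' j) → f0 x = f0 x')
    (hY : ∀ i ω, Y i ω = f0 (X i ω) + eps i ω)
    (fhat : Ω → (Fin d → Bool) → ℝ)
    (Jq : Ω → (Fin d → Bool) → Finset (Fin d))
    (hfmeas : ∀ x, Measurable fun ω => fhat ω x)
    (hJmeas : ∀ x, MeasurableSet {ω | ((Jq ω x) ∩ Sstar).Nonempty})
    -- on the event `J(x) ∩ S* = ∅` the prediction does not change when the
    -- coordinates of `x` in `S*` are changed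
    (hloc : ∀ ω x x', ¬ ((Jq ω x) ∩ Sstar).Nonempty → (∀ j, j ∉ Sstar → x j = x' j) →
        fhat ω x = fhat ω x')
    -- the event depends on `x` only through `x_{[d] ∖ S*}`
    (hev : ∀ ω x x', (∀ j, j ∉ Sstar → x j = x' j) →
        (((Jq ω x) ∩ Sstar).Nonempty ↔ ((Jq ω x') ∩ Sstar).Nonempty)) :
    ENNReal.ofReal
        ((1 - cubeMean fun x => (μ {ω | ((Jq ω x) ∩ Sstar).Nonempty}).toReal) *
          cubeVar f0) ≤
      ∫⁻ ω, ENNReal.ofReal (cubeRisk (fhat ω) f0) ∂μ :=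
  covariate_selection_necessary_tree_general μ d Sstar f0 hsparse fhat Jq hJmeas hloc

end GreedyTrees
end
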